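/- arXiv:1307.0364 — 4 statements merged into one kernel-verified Lean document; each statement's English description precedes it below -/
import Mathlib

section
/- For all integers m ≥ 1, l and all h, x, y ∈ ℤ/mℤ, the quantity γ^l_h(x,y) = ω_l(h,x,y)·ω_l(x,y,h)/ω_l(x,h,y) equals ζ_m^{l·h̃·⌊(x̃+ỹ)/m⌋}; in particular γ^l_h(x,y) = γ^l_h(y,x) for all x,y. -/
/-- `ζ_n = exp(2πi/n)`. -/
noncomputable def zetaC (n : ℕ) : ℂ := Complex.exp (2 * Real.pi * Complex.I / n)

/-- The 3-cocycle `ω_l(x,y,z) = ζ_m^{l·x̃·⌊(ỹ+z̃)/m⌋}` on `ℤ/mℤ`. -/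
noncomputable def omegaL (m : ℕ) (l : ℤ) (x y z : ZMod m) : ℂ :=
  zetaC m ^ (l * (x.val : ℤ) * (((y.val + z.val) / m : ℕ) : ℤ))

/-- `γ^l_h(x,y) = ω_l(h,x,y)·ω_l(x,y,h)/ω_l(x,h,y)`. -/
noncomputable def gammaL (m : ℕ) (l : ℤ) (h x y : ZMod m) : ℂ :=
  omegaL m l h x y * omegaL m l x y h / omegaL m l x h y

lemma gammaL_eq (m : ℕ) (l : ℤ) (h x y : ZMod m) :
    gammaL m l h x y = zetaC m ^ (l * (h.val : ℤ) * (((x.val + y.val) / m : ℕ) : ℤ)) := by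
  have hz : zetaC m ≠ 0 := Complex.exp_ne_zero _
  unfold gammaL omegaL
  rw [add_comm h.val y.val, mul_div_assoc, div_self (zpow_ne_zero _ hz), mul_one]

theorem statement2 (m : ℕ) (hm : 1 ≤ m) (l : ℤ) (h x y : ZMod m) :
    gammaL m l h x y = zetaC m ^ (l * (h.val : ℤ) * (((x.val + y.val) / m : ℕ) : ℤ)) ∧
    gammaL m l h x y = gammaL m l h y x := by
  refine ⟨gammaL_eq m l h x y, ?_⟩
  rw [gammaL_eq, gammaL_eq, add_comm x.val y.val]
end

section
/- For all integers m ≥ 1, l, s, all h, h', x ∈ ℤ/mℤ: γ^l_h(x,−x)^{−1}·χ^l_{h',s}(h,−x) = conj(χ^l_{h',s}(h,x)). (This is the identity (S⁻¹_*χ_ρ)(x,h) = γ_h(x,x⁻¹)^{−1}·χ_ρ(h,x⁻¹) = conj(χ_ρ(h,x)) for the S-transformation of the mapping class group action, specialized to Γ = ℤ/mℤ.) -/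
/-- The irreducible character `χ^l_{h,s}` of the twisted quantum double `D^{ω_l}(ℤ/mℤ)`. -/
noncomputable def chiL (m : ℕ) (l : ℤ) (h : ZMod m) (s : ℤ) (x y : ZMod m) : ℂ :=
  if x = h then zetaC (m ^ 2) ^ ((l * (h.val : ℤ) + m * s) * (y.val : ℤ)) else 0

/-!
Since `ω_l(x,y,z)` is symmetric in `y, z`, the 2-cocycle `γ^l_h(x,y)` reduces to `ω_l(h,x,y)`.
Writing `x̃ + (-x)~ = m·k` and `ζ_m = ζ_{m²}^m`, one gets
`χ(h,-x) = ζ_{m²}^{(l h̃ + m s)(m k - x̃)} = ζ_m^{l h̃ k} · ζ_{m²}^{m² s k} · ζ_{m²}^{-(l h̃ + m s) x̃}`,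
where the first factor is `ω_l(h,x,-x)`, the second is `1`, and the third is `conj χ(h,x)`
(when `h ≠ h'` both sides vanish). For `m = 0`, division by zero makes `ζ_0 = exp 0 = 1`.
-/

lemma zetaC_ne_zero (n : ℕ) : zetaC n ≠ 0 := Complex.exp_ne_zero _

lemma zetaC_zero : zetaC 0 = 1 := by simp [zetaC]

lemma zetaC_pow_self (n : ℕ) : zetaC n ^ n = 1 := by
  rcases Nat.eq_zero_or_pos n with rfl | hn
  · exact pow_zero _
  have hn0 : (n : ℂ) ≠ 0 := Nat.cast_ne_zero.mpr hn.ne'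
  rw [zetaC, ← Complex.exp_nat_mul, mul_div_cancel₀ _ hn0, Complex.exp_two_pi_mul_I]

lemma zetaC_sq_pow (m : ℕ) : zetaC (m ^ 2) ^ m = zetaC m := by
  rcases Nat.eq_zero_or_pos m with rfl | hm
  · simp [zetaC_zero]
  have hm0 : (m : ℂ) ≠ 0 := Nat.cast_ne_zero.mpr hm.ne'
  rw [zetaC, zetaC, ← Complex.exp_nat_mul]
  congr 1
  push_cast
  field_simp

lemma conj_zetaC_zpow (n : ℕ) (k : ℤ) :
    (starRingEnd ℂ) (zetaC n ^ k) = zetaC n ^ (-k) := by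
  rw [map_zpow₀, zpow_neg, ← inv_zpow, zetaC, ← Complex.exp_conj, ← Complex.exp_neg]
  congr 2
  simp only [div_eq_mul_inv, map_mul, Complex.conj_I, map_inv₀, map_ofNat,
    Complex.conj_ofReal, map_natCast]
  ring

lemma omegaL_swap (m : ℕ) (l : ℤ) (x y z : ZMod m) : omegaL m l x y z = omegaL m l x z y := by
  rw [omegaL, omegaL, Nat.add_comm]

lemma omegaL_ne_zero (m : ℕ) (l : ℤ) (x y z : ZMod m) : omegaL m l x y z ≠ 0 :=
  zpow_ne_zero _ (zetaC_ne_zero m)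

lemma gammaL_eq_omegaL (m : ℕ) (l : ℤ) (h x y : ZMod m) :
    gammaL m l h x y = omegaL m l h x y := by
  rw [gammaL, omegaL_swap m l x y h, mul_div_assoc, div_self (omegaL_ne_zero m l x h y), mul_one]

lemma ZMod.val_add_val_neg {m : ℕ} [NeZero m] (x : ZMod m) :
    x.val + (-x).val = m * ((x.val + (-x).val) / m) := by
  refine (Nat.mul_div_cancel' ((ZMod.natCast_eq_zero_iff _ _).mp ?_)).symm
  rw [Nat.cast_add, ZMod.natCast_zmod_val, ZMod.natCast_zmod_val, add_neg_cancel]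

lemma omegaL_mul_zetaC_sq_zpow_neg {m : ℕ} [NeZero m] (l s : ℤ) (h x : ZMod m) :
    omegaL m l h x (-x) * zetaC (m ^ 2) ^ (-((l * h.val + m * s) * x.val)) =
      zetaC (m ^ 2) ^ ((l * h.val + m * s) * (-x).val) := by
  set q := zetaC (m ^ 2)
  set k : ℕ := (x.val + (-x).val) / m
  have hq : q ≠ 0 := zetaC_ne_zero _
  have hneg : ((-x).val : ℤ) = m * k - x.val := by
    have hsum : x.val + (-x).val = m * k := ZMod.val_add_val_neg x
    zify at hsum
    linarith
  have hcycle : q ^ ((m : ℤ) ^ 2) = 1 := by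
    rw [← Nat.cast_pow, zpow_natCast]; exact zetaC_pow_self _
  rw [omegaL, ← zetaC_sq_pow, ← zpow_natCast, ← zpow_mul, ← zpow_add₀ hq, hneg,
    show (l * h.val + m * s) * (m * k - x.val)
      = (m * (l * h.val * k) + -((l * h.val + m * s) * x.val)) + (m : ℤ) ^ 2 * (s * k) by ring,
    zpow_add₀ hq _ ((m : ℤ) ^ 2 * _), zpow_mul q ((m : ℤ) ^ 2), hcycle, one_zpow, mul_one]

theorem statement7_general (m : ℕ) (l s : ℤ) (h h' x : ZMod m) :
    (gammaL m l h x (-x))⁻¹ * chiL m l h' s h (-x) =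
      (starRingEnd ℂ) (chiL m l h' s h x) := by
  rcases Nat.eq_zero_or_pos m with rfl | hm
  · simp [gammaL, omegaL, chiL, zetaC_zero]
  have : NeZero m := ⟨hm.ne'⟩
  rw [gammaL_eq_omegaL, chiL, chiL]
  split_ifs with hh
  · subst hh
    rw [conj_zetaC_zpow, ← omegaL_mul_zetaC_sq_zpow_neg, inv_mul_cancel_left₀ (omegaL_ne_zero m l h x (-x))]
  · simp

theorem statement7 (m : ℕ) (hm : 1 ≤ m) (l s : ℤ) (h h' x : ZMod m) :
    (gammaL m l h x (-x))⁻¹ * chiL m l h' s h (-x) =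
      (starRingEnd ℂ) (chiL m l h' s h x) :=
  statement7_general m l s h h' x
end

section
/- For all integers m ≥ 1, l, all integers r, r', all integers k ≥ 0, and all z ∈ ℤ/mℤ: Π_{j=1}^{k} ω_l( r·z, (r'−j·r)·z, r·z ) = ( α^l_{r·z}(r·z) )^{k} · α^l_{r·z}( (r'−k·r)·z ) / α^l_{r·z}( r'·z ), where n·z denotes the action of the integer n on z ∈ ℤ/mℤ. -/
/-- `α^l_h(x) = ζ_{m²}^{l·h̃·x̃}`. -/
noncomputable def alphaL (m : ℕ) (l : ℤ) (h x : ZMod m) : ℂ :=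
  zetaC (m ^ 2) ^ (l * (h.val : ℤ) * (x.val : ℤ))

/-!
For fixed `h`, the function `(y, x) ↦ ω_l(h, y, x)` is the coboundary of `α^l_h`: the carry
`⌊(ỹ + x̃)/m⌋` is exactly what separates `ỹ + x̃` from the representative of `y + x`, and a carry
of `m` in the exponent of `ζ_{m²}` contributes the factor `ζ_m`. The product over `j` then
telescopes, because consecutive second arguments differ by `r·z`.
-/

lemma Finset.prod_range_div_of_ne_zero {G₀ : Type*} [CommGroupWithZero G₀] (f : ℕ → G₀)
    (hf : ∀ i, f i ≠ 0) (n : ℕ) : ∏ i ∈ range n, f (i + 1) / f i = f n / f 0 := by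
  induction n with
  | zero => simp [hf 0]
  | succ n ih => rw [prod_range_succ, ih, mul_comm, div_mul_div_cancel₀ (hf n)]

lemma alphaL_ne_zero (m : ℕ) (l : ℤ) (h x : ZMod m) : alphaL m l h x ≠ 0 :=
  zpow_ne_zero _ (zetaC_ne_zero _)

lemma zetaC_sq_zpow_self (m : ℕ) : zetaC (m ^ 2) ^ (m : ℤ) = zetaC m := by
  rw [zetaC, zetaC, zpow_natCast, ← Complex.exp_nat_mul]
  congr 1
  push_cast
  rcases eq_or_ne (m : ℂ) 0 with hm | hm
  · simp [hm]
  · field_simp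

lemma omegaL_eq_alphaL_mul_alphaL_div (m : ℕ) (l : ℤ) (h y x : ZMod m) :
    omegaL m l h y x = alphaL m l h y * alphaL m l h x / alphaL m l h (y + x) := by
  rcases Nat.eq_zero_or_pos m with rfl | hm
  · -- `ζ_0 = exp 0 = 1` because `x / 0 = 0`, so both sides are `1`.
    simp [omegaL, alphaL, zetaC]
  have : NeZero m := ⟨hm.ne'⟩
  have carry : ((y.val : ℤ) + x.val) = m * (((y.val + x.val) / m : ℕ) : ℤ) + (y + x).val := by
    rw [ZMod.val_add]
    exact_mod_cast (Nat.div_add_mod _ _).symm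
  have hζ := zetaC_ne_zero (m ^ 2)
  rw [omegaL, alphaL, alphaL, alphaL, ← zetaC_sq_zpow_self, ← zpow_mul, ← zpow_add₀ hζ,
    ← zpow_sub₀ hζ]
  congr 1
  linear_combination (-(l * (h.val : ℤ))) * carry

/- The product over `j ∈ range k` corresponds to the product over `j = 1, …, k`. -/
theorem statement9_general (m : ℕ) (l : ℤ) (r r' : ℤ) (k : ℕ) (z : ZMod m) :
    (∏ j ∈ Finset.range k,
        omegaL m l (r • z) ((r' - ((j : ℤ) + 1) * r) • z) (r • z)) =
      (alphaL m l (r • z) (r • z)) ^ k * alphaL m l (r • z) ((r' - (k : ℤ) * r) • z) /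
        alphaL m l (r • z) (r' • z) := by
  set x : ℕ → ZMod m := fun j ↦ (r' - (j : ℤ) * r) • z
  have term (j : ℕ) :
      omegaL m l (r • z) ((r' - ((j : ℤ) + 1) * r) • z) (r • z) =
        alphaL m l (r • z) (r • z) *
          (alphaL m l (r • z) (x (j + 1)) / alphaL m l (r • z) (x j)) := by
    have step : x (j + 1) + r • z = x j := by
      simp only [x, ← add_zsmul]
      congr 1
      push_cast
      ring
    rw [← step, omegaL_eq_alphaL_mul_alphaL_div]
    simp only [x]
    push_cast
    ring
  rw [Finset.prod_congr rfl fun j _ ↦ term j, Finset.prod_mul_distrib, Finset.prod_const,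
    Finset.card_range, Finset.prod_range_div_of_ne_zero _ fun _ ↦ alphaL_ne_zero _ _ _ _]
  simp only [x, Nat.cast_zero, zero_mul, sub_zero, mul_div_assoc]

theorem statement9 (m : ℕ) (hm : 1 ≤ m) (l : ℤ) (r r' : ℤ) (k : ℕ) (z : ZMod m) :
    (∏ j ∈ Finset.range k,
        omegaL m l (r • z) ((r' - ((j : ℤ) + 1) * r) • z) (r • z)) =
      (alphaL m l (r • z) (r • z)) ^ k * alphaL m l (r • z) ((r' - (k : ℤ) * r) • z) /
        alphaL m l (r • z) (r' • z) :=
  statement9_general m l r r' k z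
end

section
/- Let p be an odd prime and l an integer with p ∤ l. Let n ≥ 1 and let (a_1,b_1),…,(a_n,b_n) be pairs of coprime integers such that for some 1 ≤ n_0 ≤ n: a_j = p·a'_j with p ∤ a'_j for 1 ≤ j ≤ n_0, and p ∤ a_j for j > n_0. Choose integers w_j with 4·l·a'_j·w_j ≡ 1 (mod p) for j ≤ n_0. Then Σ_{h ∈ ℤ/pℤ} Σ_{s=0}^{p−1} Π_{j=1}^{n} η_{h,s}(a_j,b_j) = S_p(−Σ_{j=1}^{n_0} b_j·w_j) · Π_{j=1}^{n_0} S_p(l·a'_j·b_j); consequently the Dijkgraaf–Witten invariant satisfies Z^{ω_l}(M_O(g;(a_1,b_1),…,(a_n,b_n))) = p^{2g−2}·S_p(−Σ_{j=1}^{n_0} b_j·w_j)·Π_{j=1}^{n_0} S_p(l·a'_j·b_j). -/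
/-- The Gauss-type sum `S_p(A) = Σ_{k=0}^{p−1} ζ_p^{A·k²}`. -/
noncomputable def SP (p : ℕ) (A : ℤ) : ℂ := ∑ k ∈ Finset.range p, zetaC p ^ (A * (k : ℤ) ^ 2)

/-- `η_{h,s}(a,b) = Σ_{z ∈ ℤ/pℤ, a·z = h} ζ_{p²}^{l·a·b·z̃² − (2·l·h̃ + p·s)·b·z̃}`. -/
noncomputable def etaP (p : ℕ) [NeZero p] (l : ℤ) (h : ZMod p) (s a b : ℤ) : ℂ :=
  ∑ z : ZMod p,
    if a • z = h then
      zetaC (p ^ 2) ^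
        (l * a * b * (z.val : ℤ) ^ 2 - (2 * l * (h.val : ℤ) + p * s) * b * (z.val : ℤ))
    else 0

open Finset

lemma zetaC_zpow_eq_stdAddChar (p : ℕ) [NeZero p] (m : ℤ) :
    zetaC p ^ m = ZMod.stdAddChar (m : ZMod p) := by
  rw [ZMod.stdAddChar_coe, zetaC, ← Complex.exp_int_mul]
  ring_nf

lemma zetaC_sq_zpow_mul (p : ℕ) (m : ℤ) : zetaC (p ^ 2) ^ ((p : ℤ) * m) = zetaC p ^ m := by
  rcases eq_or_ne p 0 with rfl | hp
  · simp [zetaC]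
  rw [zpow_mul, zetaC, zetaC, ← Complex.exp_int_mul]
  congr 2
  push_cast
  field_simp

lemma prod_zetaC_zpow {ι : Type*} (n : ℕ) (s : Finset ι) (f : ι → ℤ) :
    ∏ i ∈ s, zetaC n ^ f i = zetaC n ^ ∑ i ∈ s, f i := by
  simp only [zetaC, ← Complex.exp_int_mul, ← Complex.exp_sum, Int.cast_sum, sum_mul]

lemma ZMod.sum_range_natCast {M : Type*} [AddCommMonoid M] (p : ℕ) [NeZero p]
    (f : ZMod p → M) : ∑ k ∈ range p, f k = ∑ z : ZMod p, f z :=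
  sum_nbij' (fun k => (k : ZMod p)) ZMod.val (fun _ _ => mem_univ _)
    (fun z _ => mem_range.2 z.val_lt) (fun _ hk => ZMod.val_natCast_of_lt (mem_range.1 hk))
    (fun z _ => ZMod.natCast_zmod_val z) (fun _ _ => rfl)

lemma SP_eq_sum_stdAddChar (p : ℕ) [NeZero p] (A : ℤ) :
    SP p A = ∑ z : ZMod p, ZMod.stdAddChar ((A : ZMod p) * z ^ 2) := by
  rw [SP, ← ZMod.sum_range_natCast]
  refine sum_congr rfl fun k _ => ?_
  rw [zetaC_zpow_eq_stdAddChar]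
  push_cast
  rfl

section Eta

variable (p : ℕ) [NeZero p] (l : ℤ)

lemma etaP_natCast_mul_of_ne_zero {h : ZMod p} (hh : h ≠ 0) (s a' b : ℤ) :
    etaP p l h s ((p : ℤ) * a') b = 0 := by
  refine sum_eq_zero fun z _ => if_neg fun hz => hh ?_
  rw [← hz, zsmul_eq_mul]
  simp

lemma etaP_zero_of_isUnit (s : ℤ) {a : ℤ} (ha : IsUnit (a : ZMod p)) (b : ℤ) :
    etaP p l 0 s a b = 1 := by
  have hker (z : ZMod p) : a • z = 0 ↔ z = 0 := by
    rw [zsmul_eq_mul, ha.mul_right_eq_zero]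
  simp only [etaP, hker, sum_ite_eq', mem_univ, if_true, ZMod.val_zero]
  simp

lemma etaP_zero_natCast_mul (s a' b w : ℤ) (hw : 4 * l * a' * w ≡ 1 [ZMOD p]) :
    etaP p l 0 s ((p : ℤ) * a') b = zetaC p ^ (-(b * w * s ^ 2)) * SP p (l * a' * b) := by
  set ψ : AddChar (ZMod p) ℂ := ZMod.stdAddChar
  set A : ZMod p := ((l * a' * b : ℤ) : ZMod p)
  set t : ZMod p := 2 * w * s
  have hw' : 4 * (l : ZMod p) * a' * w = 1 := by
    exact_mod_cast (ZMod.intCast_eq_intCast_iff _ _ p).2 hw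
  have hterm (z : ZMod p) :
      zetaC (p ^ 2) ^ (l * ((p : ℤ) * a') * b * (z.val : ℤ) ^ 2
          - (2 * l * ((0 : ZMod p).val : ℤ) + p * s) * b * (z.val : ℤ))
        = ψ (A * (z - t) ^ 2) * ψ ((-(b * w * s ^ 2) : ℤ) : ZMod p) := by
    rw [ZMod.val_zero, ← AddChar.map_add_eq_mul, show l * ((p : ℤ) * a') * b * (z.val : ℤ) ^ 2 - (2 * l * ((0 : ℕ) : ℤ) + p * s) * b * z.val
      = p * (l * a' * b * z.val ^ 2 - s * b * z.val) by ring,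
      zetaC_sq_zpow_mul, zetaC_zpow_eq_stdAddChar]
    congr 1
    push_cast [ZMod.natCast_zmod_val, A, t]
    linear_combination (b * s * z - b * w * s ^ 2 : ZMod p) * hw'
  have hsmul (z : ZMod p) : ((p : ℤ) * a') • z = 0 := by
    rw [zsmul_eq_mul]
    simp
  calc etaP p l 0 s ((p : ℤ) * a') b
      = ∑ z : ZMod p, ψ (A * (z - t) ^ 2) * ψ ((-(b * w * s ^ 2) : ℤ) : ZMod p) := by
        simp only [etaP, hsmul, if_true, hterm]
    _ = (∑ z : ZMod p, ψ (A * z ^ 2)) * ψ ((-(b * w * s ^ 2) : ℤ) : ZMod p) := by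
        rw [← sum_mul]
        congr 1
        exact Fintype.sum_equiv (Equiv.subRight t) _ _ fun _ => rfl
    _ = zetaC p ^ (-(b * w * s ^ 2)) * SP p (l * a' * b) := by
        rw [SP_eq_sum_stdAddChar, zetaC_zpow_eq_stdAddChar, mul_comm]

lemma prod_range_etaP_zero (hp : p.Prime) {n n0 : ℕ} (hn0 : n0 ≤ n) (a a' b w : ℕ → ℤ)
    (hsmall : ∀ j < n0, a j = (p : ℤ) * a' j) (hbig : ∀ j, n0 ≤ j → j < n → ¬ (p : ℤ) ∣ a j)
    (hw : ∀ j < n0, 4 * l * a' j * w j ≡ 1 [ZMOD (p : ℤ)]) (s : ℤ) :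
    ∏ j ∈ range n, etaP p l 0 s (a j) (b j)
      = zetaC p ^ (-(∑ j ∈ range n0, b j * w j) * s ^ 2) *
          ∏ j ∈ range n0, SP p (l * a' j * b j) := by
  have := Fact.mk hp
  have hunit : ∀ j ∈ Ico n0 n, IsUnit (a j : ZMod p) := fun j hj => by
    obtain ⟨hj0, hjn⟩ := mem_Ico.1 hj
    rw [isUnit_iff_ne_zero, Ne, ZMod.intCast_zmod_eq_zero_iff_dvd]
    exact hbig j hj0 hjn
  rw [← prod_range_mul_prod_Ico _ hn0,
    prod_eq_one fun j hj => etaP_zero_of_isUnit p l s (hunit j hj) (b j), mul_one,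
    prod_congr rfl fun j hj => by
      rw [hsmall j (mem_range.1 hj), etaP_zero_natCast_mul p l s _ _ _ (hw j (mem_range.1 hj))],
    prod_mul_distrib, prod_zetaC_zpow, neg_mul, sum_mul, ← sum_neg_distrib]

end Eta

/- The paper's pairs `(a_j, b_j)`, `1 ≤ j ≤ n`, are indexed by `j ∈ range n`, shifted by one;
by the paper's Theorem 3.3 the second conjunct is the formula for the Dijkgraaf–Witten invariant. -/
theorem statement19_general (p : ℕ) [NeZero p] (hp : p.Prime) (l : ℤ)
    (n n0 : ℕ) (h1 : 1 ≤ n0) (h3 : n0 ≤ n)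
    (a a' b w : ℕ → ℤ)
    (hsmall : ∀ j < n0, a j = (p : ℤ) * a' j ∧ ¬ (p : ℤ) ∣ a' j)
    (hbig : ∀ j, n0 ≤ j → j < n → ¬ (p : ℤ) ∣ a j)
    (hw : ∀ j < n0, 4 * l * a' j * w j ≡ 1 [ZMOD (p : ℤ)]) (g : ℕ) :
    (∑ h : ZMod p, ∑ s ∈ Finset.range p, ∏ j ∈ Finset.range n, etaP p l h (s : ℤ) (a j) (b j)) =
      SP p (-(∑ j ∈ Finset.range n0, b j * w j)) *
        (∏ j ∈ Finset.range n0, SP p (l * a' j * b j)) ∧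
    (p : ℂ) ^ (2 * (g : ℤ) - 2) *
        (∑ h : ZMod p, ∑ s ∈ Finset.range p,
          ∏ j ∈ Finset.range n, etaP p l h (s : ℤ) (a j) (b j)) =
      (p : ℂ) ^ (2 * (g : ℤ) - 2) * SP p (-(∑ j ∈ Finset.range n0, b j * w j)) *
        (∏ j ∈ Finset.range n0, SP p (l * a' j * b j)) := by
  have hvanish (h : ZMod p) (hh : h ≠ 0) :
      ∑ s ∈ range p, ∏ j ∈ range n, etaP p l h (s : ℤ) (a j) (b j) = 0 :=
    sum_eq_zero fun s _ => prod_eq_zero (mem_range.2 (lt_of_lt_of_le h1 h3)) <| by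
      rw [(hsmall 0 h1).1]
      exact etaP_natCast_mul_of_ne_zero p l hh _ _ _
  have hsum : ∑ h : ZMod p, ∑ s ∈ range p, ∏ j ∈ range n, etaP p l h (s : ℤ) (a j) (b j)
      = SP p (-(∑ j ∈ range n0, b j * w j)) * ∏ j ∈ range n0, SP p (l * a' j * b j) := by
    rw [Fintype.sum_eq_single 0 hvanish, sum_congr rfl fun (s : ℕ) _ =>
      prod_range_etaP_zero p l hp h3 a a' b w (fun j hj => (hsmall j hj).1) hbig hw (s : ℤ),
      ← sum_mul]
    rfl
  exact ⟨hsum, by rw [hsum, mul_assoc]⟩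

theorem statement19 (p : ℕ) [NeZero p] (hp : p.Prime) (hp2 : p ≠ 2) (l : ℤ)
    (hl : ¬ (p : ℤ) ∣ l) (n n0 : ℕ) (hn : 1 ≤ n) (h1 : 1 ≤ n0) (h3 : n0 ≤ n)
    (a a' b w : ℕ → ℤ) (hcop : ∀ j < n, IsCoprime (a j) (b j))
    (hsmall : ∀ j < n0, a j = (p : ℤ) * a' j ∧ ¬ (p : ℤ) ∣ a' j)
    (hbig : ∀ j, n0 ≤ j → j < n → ¬ (p : ℤ) ∣ a j)
    (hw : ∀ j < n0, 4 * l * a' j * w j ≡ 1 [ZMOD (p : ℤ)]) (g : ℕ) :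
    (∑ h : ZMod p, ∑ s ∈ Finset.range p, ∏ j ∈ Finset.range n, etaP p l h (s : ℤ) (a j) (b j)) =
      SP p (-(∑ j ∈ Finset.range n0, b j * w j)) *
        (∏ j ∈ Finset.range n0, SP p (l * a' j * b j)) ∧
    (p : ℂ) ^ (2 * (g : ℤ) - 2) *
        (∑ h : ZMod p, ∑ s ∈ Finset.range p,
          ∏ j ∈ Finset.range n, etaP p l h (s : ℤ) (a j) (b j)) =
      (p : ℂ) ^ (2 * (g : ℤ) - 2) * SP p (-(∑ j ∈ Finset.range n0, b j * w j)) *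
        (∏ j ∈ Finset.range n0, SP p (l * a' j * b j)) :=
  statement19_general p hp l n n0 h1 h3 a a' b w hsmall hbig hw g
end
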